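/- Let G be a cubic simple graph on n vertices with girth at least 16 and let A be a MAI set of G. With B = V(G) \ A, let Y be the set of vertices of degree 1 in the induced subgraph G[A], let Z be the set of vertices of degree 1 in G[B], and set s = |Y|/2, t = |Z|/2, and i = n/2 − |A|. Then i ≥ 0 and t ≥ s. -/

import Mathlib

/-- A set of vertices is independent if its vertices are pairwise nonadjacent. -/
def IsIndep {V : Type*} (G : SimpleGraph V) (s : Set V) : Prop :=
  s.Pairwise fun u v => ¬ G.Adj u v

/-- The independence number of a graph: the largest size of an independent set. -/
noncomputable def indepNum {V : Type*} (G : SimpleGraph V) : ℕ :=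
  sSup {n | ∃ s : Set V, IsIndep G s ∧ s.ncard = n}

/-- A graph is cubic (3-regular) if every vertex has exactly three neighbors. -/
def IsCubic {V : Type*} (G : SimpleGraph V) : Prop :=
  ∀ v : V, (G.neighborSet v).ncard = 3

/-- `A` is an AI set (almost independent set) if the subgraph induced by `A` has maximum
degree at most 1, i.e. every vertex of `A` has at most one neighbor inside `A`. -/
def IsAI {V : Type*} (G : SimpleGraph V) (A : Set V) : Prop :=
  ∀ a ∈ A, ({b | b ∈ A ∧ G.Adj a b}).ncard ≤ 1

/-- `A` is a MAI set (maximum almost independent set) if `A` is an AI set containing an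
independent set of maximum size `α(G)`, and `A` is largest among such sets. -/
def IsMAI {V : Type*} (G : SimpleGraph V) (A : Set V) : Prop :=
  IsAI G A ∧ (∃ s ⊆ A, IsIndep G s ∧ s.ncard = indepNum G) ∧
    ∀ A' : Set V, IsAI G A' → (∃ s ⊆ A', IsIndep G s ∧ s.ncard = indepNum G) →
      A'.ncard ≤ A.ncard

/-!
For an AI set `C` write `Y_C` for the degree-one vertices of `G[C]`. Deleting one endpoint
of each edge of `G[C]` gives `2|C| ≤ 2α + |Y_C|`, while an independent `S ⊆ C` meets each
such edge at most once, so `2|S| + |Y_C| ≤ 2|C|`; hence a MAI set `A` is tight: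
`2|A| = 2α + |Y|`. Maximality and tightness force every vertex outside `A` to have at least
two neighbours in `A` (otherwise add it to `A`, or swap it for its neighbour), so in a cubic
graph `B = Aᶜ` is AI too. Counting the edges between `A` and `B` from both sides gives
`3|A| - |Y| = 3|B| - |Z|`, and with `2|B| - |Z| ≤ 2α = 2|A| - |Y|` this yields `|A| ≤ |B|`
and `|Y| ≤ |Z|`.
-/

open Set

/-- The paper's `Y` and `Z` are `degOneSet G A` and `degOneSet G Aᶜ`. -/
def degOneSet {V : Type*} (G : SimpleGraph V) (C : Set V) : Set V :=
  {a ∈ C | (C ∩ G.neighborSet a).ncard = 1}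

section

variable {V : Type*} {G : SimpleGraph V} {A C S T : Set V} {a b v : V}

theorem IsIndep.mono (hS : IsIndep G S) (hT : T ⊆ S) : IsIndep G T :=
  Set.Pairwise.mono hT hS

theorem degOneSet_subset : degOneSet G C ⊆ C := fun _ ha => ha.1

theorem degOneSet_insert_subset (hv : C ∩ G.neighborSet v = ∅) :
    degOneSet G (insert v C) ⊆ degOneSet G C := by
  rintro x ⟨hx, hx1⟩
  have hxv : ¬ G.Adj x v := fun hadj => by
    rcases hx with rfl | hx
    · exact G.irrefl hadj
    · exact (eq_empty_iff_forall_notMem.1 hv) x ⟨hx, hadj.symm⟩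
  rw [insert_inter_of_notMem (t := G.neighborSet x) hxv] at hx1
  rcases hx with rfl | hx
  · simp [hv] at hx1
  · exact ⟨hx, hx1⟩

theorem isAI_iff : IsAI G C ↔ ∀ a ∈ C, (C ∩ G.neighborSet a).ncard ≤ 1 := Iff.rfl

theorem IsAI.ncard_inter_neighborSet_le_one (hC : IsAI G C) (ha : a ∈ C) :
    (C ∩ G.neighborSet a).ncard ≤ 1 :=
  hC a ha

theorem IsAI.insert_of_neighbors_isolated (hC : IsAI G C) (hv : (C ∩ G.neighborSet v).ncard ≤ 1)
    (hnbr : ∀ a ∈ C, G.Adj v a → C ∩ G.neighborSet a = ∅) : IsAI G (insert v C) := by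
  refine isAI_iff.2 ?_
  rintro x (rfl | hx)
  · rwa [insert_inter_of_notMem (t := G.neighborSet x) (G.irrefl (v := x))]
  · by_cases hxv : G.Adj x v
    · rw [insert_inter_of_mem (t := G.neighborSet x) hxv, hnbr x hx hxv.symm]
      simp
    · rw [insert_inter_of_notMem (t := G.neighborSet x) hxv]
      exact hC x hx

section Finite

variable [Finite V]

theorem ncard_le_indepNum (hS : IsIndep G S) : S.ncard ≤ indepNum G :=
  le_csSup ⟨Nat.card V, by rintro n ⟨T, -, rfl⟩; exact ncard_le_card T⟩ ⟨S, hS, rfl⟩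

theorem IsAI.mono (hC : IsAI G C) (hT : T ⊆ C) : IsAI G T := fun a ha =>
  (ncard_le_ncard (inter_subset_inter_left _ hT)).trans (hC a (hT ha))

theorem IsAI.eq_of_adj {b' : V} (hC : IsAI G C) (ha : a ∈ C) (hb : b ∈ C) (hb' : b' ∈ C)
    (hab : G.Adj a b) (hab' : G.Adj a b') : b = b' :=
  (ncard_le_one).1 (hC a ha) b ⟨hb, hab⟩ b' ⟨hb', hab'⟩

theorem IsAI.mem_degOneSet_iff (hC : IsAI G C) :
    a ∈ degOneSet G C ↔ a ∈ C ∧ ∃ b ∈ C, G.Adj a b := by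
  refine and_congr_right fun ha => ?_
  have hle := hC.ncard_inter_neighborSet_le_one ha
  have hpos : 0 < (C ∩ G.neighborSet a).ncard ↔ ∃ b ∈ C, G.Adj a b := ncard_pos
  exact ⟨fun h => hpos.1 (by omega), fun h => by have := hpos.2 h; omega⟩

/-- The partner map of `G[C]` sends `T` injectively into `degOneSet G C \ T`. -/
theorem IsAI.two_mul_ncard_le (hC : IsAI G C) (hTY : T ⊆ degOneSet G C) (hT : IsIndep G T) :
    2 * T.ncard ≤ (degOneSet G C).ncard := by
  choose! p hpC hadj using fun y (hy : y ∈ T) => (hC.mem_degOneSet_iff.1 (hTY hy)).2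
  have hle : T.ncard ≤ (degOneSet G C \ T).ncard := by
    refine ncard_le_ncard_of_injOn p (fun y hy => ⟨?_, fun hpy => ?_⟩) (fun y hy z hz hyz => ?_)
    · exact hC.mem_degOneSet_iff.2 ⟨hpC y hy, y, (hTY hy).1, (hadj y hy).symm⟩
    · exact hT hy hpy (hadj y hy).ne (hadj y hy)
    · refine hC.eq_of_adj (hpC y hy) (hTY hy).1 (hTY hz).1 (hadj y hy).symm ?_
      exact hyz ▸ (hadj z hz).symm
  have hTle : T.ncard ≤ (degOneSet G C).ncard := ncard_le_ncard hTY
  rw [ncard_sdiff hTY] at hle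
  omega

/-- Removing the smaller endpoint (in some well-order of `V`) of each edge of `G[C]` leaves an
independent set. -/
theorem IsAI.two_mul_ncard_le_indepNum (hC : IsAI G C) :
    2 * C.ncard ≤ 2 * indepNum G + (degOneSet G C).ncard := by
  let _ : LinearOrder V := IsWellOrder.linearOrder WellOrderingRel
  set R := {u ∈ C | ∃ w ∈ C, G.Adj u w ∧ u < w}
  have hRY : R ⊆ degOneSet G C := fun u ⟨hu, w, hw, huw, _⟩ =>
    hC.mem_degOneSet_iff.2 ⟨hu, w, hw, huw⟩
  have hR : IsIndep G R := by
    rintro u ⟨hu, w, hw, huw, hlt⟩ u' ⟨hu', w', hw', huw', hlt'⟩ - hadj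
    have hw_eq : w = u' := hC.eq_of_adj hu hw hu' huw hadj
    have hw'_eq : w' = u := hC.eq_of_adj hu' hw' hu huw' hadj.symm
    subst hw_eq hw'_eq
    exact lt_asymm hlt hlt'
  have hCR : IsIndep G (C \ R) := by
    rintro u ⟨hu, huR⟩ w ⟨hw, hwR⟩ hne hadj
    rcases lt_or_gt_of_ne hne with hlt | hlt
    · exact huR ⟨hu, w, hw, hadj, hlt⟩
    · exact hwR ⟨hw, u, hu, hadj.symm, hlt⟩
  have hsplit := ncard_sdiff_add_ncard_of_subset (hRY.trans degOneSet_subset)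
  have := ncard_le_indepNum hCR
  have := hC.two_mul_ncard_le hRY hR
  omega

theorem IsAI.two_mul_ncard_add_le (hC : IsAI G C) (hS : IsIndep G S) (hSC : S ⊆ C) :
    2 * S.ncard + (degOneSet G C).ncard ≤ 2 * C.ncard := by
  have hsplitS := ncard_inter_add_ncard_sdiff_eq_ncard S (degOneSet G C)
  have hsplitC := ncard_sdiff_add_ncard_of_subset (degOneSet_subset : degOneSet G C ⊆ C)
  have := hC.two_mul_ncard_le inter_subset_right (hS.mono inter_subset_left)
  have := ncard_le_ncard (sdiff_subset_sdiff_left hSC : S \ degOneSet G C ⊆ C \ degOneSet G C)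
  omega

theorem IsMAI.two_mul_ncard_eq (hA : IsMAI G A) :
    2 * A.ncard = 2 * indepNum G + (degOneSet G A).ncard := by
  obtain ⟨hAI, ⟨S, hSA, hS, hScard⟩, -⟩ := hA
  have := hAI.two_mul_ncard_le_indepNum
  have := hAI.two_mul_ncard_add_le hS hSA
  omega

theorem IsAI.degOneSet_sdiff_singleton_subset (hC : IsAI G C) (ha : a ∈ C) (hb : b ∈ C)
    (hab : G.Adj a b) : degOneSet G (C \ {a}) ⊆ degOneSet G C \ {a, b} := by
  intro x hx
  obtain ⟨⟨hxC, hxa⟩, y, ⟨hyC, hya⟩, hxy⟩ :=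
    ((hC.mono sdiff_subset).mem_degOneSet_iff).1 hx
  refine ⟨hC.mem_degOneSet_iff.2 ⟨hxC, y, hyC, hxy⟩, ?_⟩
  rintro (rfl | rfl)
  · exact hxa rfl
  · exact hya (hC.eq_of_adj hxC hyC ha hxy hab.symm)

/-- Swapping the neighbour `a` of `v` for `v` keeps the size of `A` but destroys the edge of
`G[A]` at `a`, which would beat the bound `2|A| ≤ 2α + |Y|`. -/
theorem IsAI.notMem_degOneSet_of_adj (hA : IsAI G A)
    (htight : 2 * indepNum G + (degOneSet G A).ncard ≤ 2 * A.ncard) (hv : v ∉ A)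
    (hvA : (A ∩ G.neighborSet v).ncard ≤ 1) (ha : a ∈ A) (hva : G.Adj v a) :
    a ∉ degOneSet G A := by
  intro haY
  obtain ⟨-, b, hb, hab⟩ := hA.mem_degOneSet_iff.1 haY
  have hCv : (A \ {a}) ∩ G.neighborSet v = ∅ := by
    refine eq_empty_iff_forall_notMem.2 fun x ⟨⟨hx, hxa⟩, hvx⟩ => hxa ?_
    exact (ncard_le_one).1 hvA x ⟨hx, hvx⟩ a ⟨ha, hva⟩
  have hA' : IsAI G (insert v (A \ {a})) :=
    (hA.mono sdiff_subset).insert_of_neighbors_isolated (by simp [hCv]) fun x hx hvx =>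
      (eq_empty_iff_forall_notMem.1 hCv x ⟨hx, hvx⟩).elim
  have hcard : (insert v (A \ {a})).ncard = A.ncard := by
    rw [ncard_insert_of_notMem fun h => hv h.1, ncard_sdiff_singleton_add_one ha]
  have hY : (degOneSet G (insert v (A \ {a}))).ncard + 2 ≤ (degOneSet G A).ncard := by
    have hpair : {a, b} ⊆ degOneSet G A :=
      insert_subset haY (singleton_subset_iff.2 (hA.mem_degOneSet_iff.2 ⟨hb, a, ha, hab.symm⟩))
    have hsub := ncard_le_ncard
      ((degOneSet_insert_subset hCv).trans (hA.degOneSet_sdiff_singleton_subset ha hb hab))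
    have h2 := ncard_le_ncard hpair
    rw [ncard_sdiff hpair, ncard_pair hab.ne] at hsub
    rw [ncard_pair hab.ne] at h2
    omega
  have := hA'.two_mul_ncard_le_indepNum
  omega

theorem IsMAI.two_le_ncard_inter_neighborSet (hA : IsMAI G A) (hv : v ∉ A) :
    2 ≤ (A ∩ G.neighborSet v).ncard := by
  have htight := hA.two_mul_ncard_eq.ge
  obtain ⟨hAI, ⟨S, hSA, hS, hScard⟩, hmax⟩ := hA
  by_contra! hlt
  have hvA : (A ∩ G.neighborSet v).ncard ≤ 1 := by omega
  have hAv : IsAI G (insert v A) := hAI.insert_of_neighbors_isolated hvA fun a ha hva => by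
    have ha1 := hAI.ncard_inter_neighborSet_le_one ha
    have haY := hAI.notMem_degOneSet_of_adj htight hv hvA ha hva
    have : (A ∩ G.neighborSet a).ncard ≠ 1 := fun h => haY ⟨ha, h⟩
    exact (ncard_eq_zero).1 (by omega)
  have := hmax _ hAv ⟨S, hSA.trans (subset_insert v A), hS, hScard⟩
  rw [ncard_insert_of_notMem hv] at this
  omega

theorem ncard_inter_neighborSet_add_compl (hcubic : IsCubic G) (A : Set V) (x : V) :
    (A ∩ G.neighborSet x).ncard + (Aᶜ ∩ G.neighborSet x).ncard = 3 := by
  rw [inter_comm, inter_comm Aᶜ, ← sdiff_eq, ncard_inter_add_ncard_sdiff_eq_ncard, hcubic x]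

theorem IsMAI.isAI_compl (hcubic : IsCubic G) (hA : IsMAI G A) : IsAI G Aᶜ :=
  isAI_iff.2 fun x hx => by
    have := hA.two_le_ncard_inter_neighborSet hx
    have := ncard_inter_neighborSet_add_compl hcubic A x
    omega

end Finite

section Fintype

variable [Fintype V]

open Classical in
theorem IsAI.sum_ncard_inter_neighborSet (hC : IsAI G C) :
    ∑ x ∈ C.toFinset, (C ∩ G.neighborSet x).ncard = (degOneSet G C).ncard := by
  have hY : degOneSet G C = ↑{x ∈ C.toFinset | (C ∩ G.neighborSet x).ncard = 1} := by
    ext x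
    simp [degOneSet]
  rw [hY, ncard_coe_finset, Finset.card_filter]
  refine Finset.sum_congr rfl fun x hx => ?_
  have := hC.ncard_inter_neighborSet_le_one (mem_toFinset.1 hx)
  split_ifs <;> omega

open Classical in
theorem sum_ncard_inter_neighborSet_comm (P Q : Set V) :
    ∑ x ∈ P.toFinset, (Q ∩ G.neighborSet x).ncard =
      ∑ y ∈ Q.toFinset, (P ∩ G.neighborSet y).ncard := by
  have hcount : ∀ (R : Set V) x,
      (R ∩ G.neighborSet x).ncard = ∑ y ∈ R.toFinset, if G.Adj x y then 1 else 0 := by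
    intro R x
    rw [← Finset.card_filter, ← ncard_coe_finset]
    congr 1
    ext y
    simp
  simp_rw [hcount]
  rw [Finset.sum_comm]
  simp_rw [G.adj_comm]

open Classical in
theorem IsAI.three_mul_ncard_eq (hcubic : IsCubic G) (hC : IsAI G C) :
    3 * C.ncard =
      (degOneSet G C).ncard + ∑ x ∈ C.toFinset, (Cᶜ ∩ G.neighborSet x).ncard := by
  rw [← hC.sum_ncard_inter_neighborSet, ← Finset.sum_add_distrib,
    Finset.sum_congr rfl fun x _ => ncard_inter_neighborSet_add_compl hcubic C x,
    Finset.sum_const, smul_eq_mul, ncard_eq_toFinset_card', mul_comm]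

end Fintype

end

theorem MAI_i_nonneg_t_ge_s {V : Type*} [Fintype V] (G : SimpleGraph V)
    (hcubic : IsCubic G)
    (A : Set V) (hA : IsMAI G A) (Y Z : Set V)
    (hY : Y = {a ∈ A | ({b | b ∈ A ∧ G.Adj a b}).ncard = 1})
    (hZ : Z = {a ∈ Aᶜ | ({b | b ∈ Aᶜ ∧ G.Adj a b}).ncard = 1})
    (s t i : ℝ) (hs : 2 * s = (Y.ncard : ℝ)) (ht : 2 * t = (Z.ncard : ℝ))
    (hi : i = (Fintype.card V : ℝ) / 2 - (A.ncard : ℝ)) :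
    0 ≤ i ∧ s ≤ t := by
  classical
  change Y = degOneSet G A at hY
  change Z = degOneSet G Aᶜ at hZ
  have hB : IsAI G Aᶜ := hA.isAI_compl hcubic
  have htightA := hA.two_mul_ncard_eq
  have hboundB := hB.two_mul_ncard_le_indepNum
  have hcountA := hA.1.three_mul_ncard_eq hcubic
  have hcountB := hB.three_mul_ncard_eq hcubic
  rw [compl_compl, ← sum_ncard_inter_neighborSet_comm] at hcountB
  have hn : A.ncard + Aᶜ.ncard = Fintype.card V := by
    rw [ncard_add_ncard_compl, Nat.card_eq_fintype_card]
  have hAB : A.ncard ≤ Aᶜ.ncard := by omega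
  have hYZ : Y.ncard ≤ Z.ncard := by rw [hY, hZ]; omega
  have hn' : (Fintype.card V : ℝ) = A.ncard + Aᶜ.ncard := by exact_mod_cast hn.symm
  have hAB' : (A.ncard : ℝ) ≤ Aᶜ.ncard := by exact_mod_cast hAB
  have hYZ' : (Y.ncard : ℝ) ≤ Z.ncard := by exact_mod_cast hYZ
  constructor <;> linarith
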